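/- arXiv:1406.7406 — 3 statements merged into one kernel-verified Lean document; each statement's English description precedes it below -/
import Mathlib

section
/- Let n ≥ 1 be an integer and T, D, M, c₁, c₂, c₃, c₄ > 0. Suppose K : (0,∞) × (0,D] → [0,∞) is measurable and satisfies: (i) c₁ t^{-n/2} e^{-r²/(c₂ t)} ≤ K(t,r) ≤ c₃ t^{-n/2} e^{-r²/(c₄ t)} for all 0 < t < T and 0 < r ≤ D; (ii) 0 ≤ K(t,r) ≤ M for all t ≥ T and 0 < r ≤ D. Define P(y,r) = (y/(2√π)) ∫₀^∞ e^{-y²/(4t)} K(t,r) t^{-3/2} dt. Then there exist constants 0 < c ≤ C, depending only on n, T, D, M, c₁, c₂, c₃, c₄, such that for all 0 < y < 1 and all 0 < r ≤ D: c · y/(y² + r²)^{(n+1)/2} ≤ P(y,r) ≤ C · y/(y² + r²)^{(n+1)/2}. -/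
open MeasureTheory Real Set

/-!
For `t < T` the Gaussian upper bound and the factor `e^{-y²/(4t)}` combine into
`e^{-a(y²+r²)/t} t^{-(n+1)/2-1}` with `a = min (1/4) (1/c₄)`, whose integral over `(0, ∞)` is
`Γ((n+1)/2) (a(y²+r²))^{-(n+1)/2}` (substitute `t ↦ 1/t` in the Gamma integral); for `t ≥ T` the
integrand is at most `M t^{-3/2}`, which contributes a constant, absorbed since `y² + r² ≤ 1 + D²`.
For the lower bound, choose `ε` so that `2ε(1 + D²) < T`: on `(ε(y²+r²), 2ε(y²+r²)]` the Gaussian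
lower bound applies and the integrand is at least a constant times `(y²+r²)^{-(n+3)/2}`, while the
interval has length `ε(y²+r²)`.
-/

section InverseGamma

variable {b p : ℝ}

private lemma gammaIntegrand_comp_inv_eqOn :
    EqOn (fun t : ℝ => (|(-1 : ℝ)| * t ^ ((-1 : ℝ) - 1)) •
        (fun u : ℝ => u ^ (p - 1) * exp (-(b * u))) (t ^ (-1 : ℝ)))
      (fun t => exp (-(b / t)) * t ^ (-p - 1)) (Ioi 0) := by
  intro t (ht : 0 < t)
  simp only [abs_neg, abs_one, one_mul, smul_eq_mul]
  rw [← rpow_mul ht.le, rpow_neg_one, ← div_eq_mul_inv, ← mul_assoc, ← rpow_add ht,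
    show (-1 : ℝ) - 1 + -1 * (p - 1) = -p - 1 by ring, mul_comm]

lemma integrableOn_exp_neg_div_mul_rpow (hb : 0 < b) (hp : 0 < p) :
    IntegrableOn (fun t : ℝ => exp (-(b / t)) * t ^ (-p - 1)) (Ioi 0) := by
  have hgamma : IntegrableOn (fun u : ℝ => u ^ (p - 1) * exp (-(b * u))) (Ioi 0) := by
    simpa only [rpow_one, neg_mul] using
      integrableOn_rpow_mul_exp_neg_mul_rpow (p := 1) (by linarith) zero_lt_one hb
  exact (integrableOn_congr_fun gammaIntegrand_comp_inv_eqOn measurableSet_Ioi).mp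
    ((integrableOn_Ioi_comp_rpow_iff _ (by norm_num)).2 hgamma)

lemma integral_exp_neg_div_mul_rpow (hb : 0 < b) (hp : 0 < p) :
    ∫ t in Ioi (0 : ℝ), exp (-(b / t)) * t ^ (-p - 1) = b ^ (-p) * Gamma p := by
  rw [← setIntegral_congr_fun measurableSet_Ioi gammaIntegrand_comp_inv_eqOn,
    integral_comp_rpow_Ioi (fun u : ℝ => u ^ (p - 1) * exp (-(b * u))) (by norm_num),
    integral_rpow_mul_exp_neg_mul_Ioi hp hb,
    one_div, inv_rpow hb.le, rpow_neg hb.le]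

end InverseGamma

noncomputable def subordinationIntegrand (k : ℝ → ℝ) (y t : ℝ) : ℝ :=
  exp (-(y ^ 2 / (4 * t))) * k t * t ^ (-(3 : ℝ) / 2)

lemma exp_neg_div_mul_exp_neg_div_le {a b u v t : ℝ} (hu : 0 ≤ u) (hv : 0 ≤ v) (ht : 0 ≤ t) :
    exp (-(u / (a * t))) * exp (-(v / (b * t))) ≤ exp (-(min a⁻¹ b⁻¹ * (u + v) / t)) := by
  rw [← exp_add, exp_le_exp, show u / (a * t) = a⁻¹ * u / t by ring,
    show v / (b * t) = b⁻¹ * v / t by ring, ← neg_add, ← add_div, neg_le_neg_iff]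
  gcongr
  nlinarith [min_le_left a⁻¹ b⁻¹, min_le_right a⁻¹ b⁻¹]

lemma exp_neg_inv_le_exp_neg_div {c ε s u t : ℝ} (hc : 0 < c) (hε : 0 < ε) (hs : 0 < s)
    (hu : u ≤ s) (ht : ε * s ≤ t) : exp (-(1 / (c * ε))) ≤ exp (-(u / (c * t))) := by
  rw [exp_le_exp, neg_le_neg_iff]
  calc u / (c * t) ≤ s / (c * (ε * s)) := by gcongr
    _ = 1 / (c * ε) := by field_simp

section Subordination

variable {k : ℝ → ℝ} {n T M c₁ c₂ c₃ c₄ y r t ε : ℝ}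

lemma measurable_subordinationIntegrand (hk : Measurable k) :
    Measurable (subordinationIntegrand k y) := by
  unfold subordinationIntegrand
  fun_prop

lemma subordinationIntegrand_nonneg (ht : 0 < t) (hk : 0 ≤ k t) :
    0 ≤ subordinationIntegrand k y t := by
  unfold subordinationIntegrand
  positivity

lemma subordinationIntegrand_le_mul_rpow_of_le (ht : 0 < t) (hk : 0 ≤ k t) (hkM : k t ≤ M) :
    subordinationIntegrand k y t ≤ M * t ^ (-(3 : ℝ) / 2) := by
  have hexp : exp (-(y ^ 2 / (4 * t))) ≤ 1 :=
    exp_le_one_iff.2 (by simp only [neg_nonpos]; positivity)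
  unfold subordinationIntegrand
  gcongr
  simpa using mul_le_mul hexp hkM hk zero_le_one

lemma subordinationIntegrand_le_of_le_gaussian (hc₃ : 0 ≤ c₃) (ht : 0 < t)
    (hk : k t ≤ c₃ * t ^ (-n / 2) * exp (-(r ^ 2 / (c₄ * t)))) :
    subordinationIntegrand k y t ≤
      c₃ * (exp (-(min 4⁻¹ c₄⁻¹ * (y ^ 2 + r ^ 2) / t)) * t ^ (-((n + 1) / 2) - 1)) :=
  calc subordinationIntegrand k y t
      ≤ exp (-(y ^ 2 / (4 * t))) * (c₃ * t ^ (-n / 2) * exp (-(r ^ 2 / (c₄ * t)))) *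
          t ^ (-(3 : ℝ) / 2) := by unfold subordinationIntegrand; gcongr
    _ = c₃ * ((exp (-(y ^ 2 / (4 * t))) * exp (-(r ^ 2 / (c₄ * t)))) *
          t ^ (-((n + 1) / 2) - 1)) := by
        rw [show -((n + 1) / 2) - 1 = -n / 2 + -(3 : ℝ) / 2 by ring, rpow_add ht]; ring
    _ ≤ _ := by gcongr; exact exp_neg_div_mul_exp_neg_div_le (by positivity) (by positivity) ht.le

noncomputable def subordinationMajorant (A b α T M t : ℝ) : ℝ :=
  A * (exp (-(b / t)) * t ^ (-α - 1)) + (Ici T).indicator (fun t => M * t ^ (-(3 : ℝ) / 2)) t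

lemma subordinationIntegrand_le_subordinationMajorant (hc₃ : 0 ≤ c₃) (ht : 0 < t)
    (hk : 0 ≤ k t) (hgauss : t < T → k t ≤ c₃ * t ^ (-n / 2) * exp (-(r ^ 2 / (c₄ * t))))
    (hbdd : T ≤ t → k t ≤ M) :
    subordinationIntegrand k y t ≤
      subordinationMajorant c₃ (min 4⁻¹ c₄⁻¹ * (y ^ 2 + r ^ 2)) ((n + 1) / 2) T M t := by
  unfold subordinationMajorant
  rcases lt_or_ge t T with htT | htT
  · rw [indicator_of_notMem (show t ∉ Ici T from not_le.2 htT), add_zero]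
    exact subordinationIntegrand_le_of_le_gaussian hc₃ ht (hgauss htT)
  · rw [indicator_of_mem (show t ∈ Ici T from htT)]
    have : 0 ≤ c₃ * (exp (-(min 4⁻¹ c₄⁻¹ * (y ^ 2 + r ^ 2) / t)) * t ^ (-((n + 1) / 2) - 1)) := by
      positivity
    linarith [subordinationIntegrand_le_mul_rpow_of_le (y := y) ht hk (hbdd htT)]

lemma integrable_indicator_Ici_mul_rpow {a : ℝ} (hT : 0 < T) (ha : a < -1) :
    Integrable ((Ici T).indicator fun t => M * t ^ a) := by
  rw [integrable_indicator_iff measurableSet_Ici, integrableOn_Ici_iff_integrableOn_Ioi]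
  exact (integrableOn_Ioi_rpow_of_lt ha hT).const_mul M

section Majorant

variable {A b α : ℝ}

lemma integrableOn_subordinationMajorant (hb : 0 < b) (hα : 0 < α) (hT : 0 < T) :
    IntegrableOn (subordinationMajorant A b α T M) (Ioi 0) :=
  ((integrableOn_exp_neg_div_mul_rpow hb hα).const_mul A).add
    (integrable_indicator_Ici_mul_rpow hT (by norm_num)).integrableOn

lemma integral_subordinationMajorant (hb : 0 < b) (hα : 0 < α) (hT : 0 < T) :
    ∫ t in Ioi 0, subordinationMajorant A b α T M t =
      A * b ^ (-α) * Gamma α + 2 * M * T ^ (-(1 : ℝ) / 2) := by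
  unfold subordinationMajorant
  rw [integral_add ((integrableOn_exp_neg_div_mul_rpow hb hα).const_mul A)
      (integrable_indicator_Ici_mul_rpow hT (by norm_num)).integrableOn,
    integral_const_mul, integral_exp_neg_div_mul_rpow hb hα,
    setIntegral_indicator measurableSet_Ici,
    inter_eq_self_of_subset_right (Ici_subset_Ioi.2 hT),
    integral_Ici_eq_integral_Ioi, integral_const_mul,
    integral_Ioi_rpow_of_lt (by norm_num) hT, show -(3 : ℝ) / 2 + 1 = -1 / 2 by norm_num]
  ring

end Majorant

lemma integrableOn_subordinationIntegrand (hkm : Measurable k) (hT : 0 < T) (hn : -1 < n)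
    (hc₃ : 0 ≤ c₃) (hc₄ : 0 < c₄) (hs : 0 < y ^ 2 + r ^ 2) (hk : ∀ t, 0 < t → 0 ≤ k t)
    (hgauss : ∀ t, 0 < t → t < T → k t ≤ c₃ * t ^ (-n / 2) * exp (-(r ^ 2 / (c₄ * t))))
    (hbdd : ∀ t, T ≤ t → k t ≤ M) :
    IntegrableOn (subordinationIntegrand k y) (Ioi 0) := by
  have hb : 0 < min 4⁻¹ c₄⁻¹ * (y ^ 2 + r ^ 2) := by positivity
  have hα : 0 < (n + 1) / 2 := by linarith
  refine (integrableOn_subordinationMajorant (A := c₃) (M := M) hb hα hT).mono'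
    (measurable_subordinationIntegrand hkm).aestronglyMeasurable ?_
  filter_upwards [ae_restrict_mem measurableSet_Ioi] with t (ht : 0 < t)
  rw [norm_of_nonneg (subordinationIntegrand_nonneg ht (hk t ht))]
  exact subordinationIntegrand_le_subordinationMajorant hc₃ ht (hk t ht) (hgauss t ht) (hbdd t)

lemma integral_subordinationIntegrand_le (hkm : Measurable k) (hT : 0 < T) (hn : -1 < n)
    (hc₃ : 0 ≤ c₃) (hc₄ : 0 < c₄) (hs : 0 < y ^ 2 + r ^ 2) (hk : ∀ t, 0 < t → 0 ≤ k t)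
    (hgauss : ∀ t, 0 < t → t < T → k t ≤ c₃ * t ^ (-n / 2) * exp (-(r ^ 2 / (c₄ * t))))
    (hbdd : ∀ t, T ≤ t → k t ≤ M) :
    ∫ t in Ioi 0, subordinationIntegrand k y t ≤
      c₃ * (min 4⁻¹ c₄⁻¹ * (y ^ 2 + r ^ 2)) ^ (-((n + 1) / 2)) * Gamma ((n + 1) / 2) +
        2 * M * T ^ (-(1 : ℝ) / 2) := by
  have hb : 0 < min 4⁻¹ c₄⁻¹ * (y ^ 2 + r ^ 2) := by positivity
  have hα : 0 < (n + 1) / 2 := by linarith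
  rw [← integral_subordinationMajorant hb hα hT]
  exact setIntegral_mono_on
    (integrableOn_subordinationIntegrand hkm hT hn hc₃ hc₄ hs hk hgauss hbdd)
    (integrableOn_subordinationMajorant hb hα hT) measurableSet_Ioi fun t ht =>
      subordinationIntegrand_le_subordinationMajorant hc₃ ht (hk t ht) (hgauss t ht) (hbdd t)

lemma integral_subordinationIntegrand_le_mul_rpow {S : ℝ} (hkm : Measurable k) (hT : 0 < T)
    (hn : -1 < n) (hM : 0 ≤ M) (hc₃ : 0 ≤ c₃) (hc₄ : 0 < c₄) (hs : 0 < y ^ 2 + r ^ 2)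
    (hsS : y ^ 2 + r ^ 2 ≤ S) (hk : ∀ t, 0 < t → 0 ≤ k t)
    (hgauss : ∀ t, 0 < t → t < T → k t ≤ c₃ * t ^ (-n / 2) * exp (-(r ^ 2 / (c₄ * t))))
    (hbdd : ∀ t, T ≤ t → k t ≤ M) :
    ∫ t in Ioi 0, subordinationIntegrand k y t ≤
      (c₃ * (min 4⁻¹ c₄⁻¹) ^ (-((n + 1) / 2)) * Gamma ((n + 1) / 2) +
        2 * M * T ^ (-(1 : ℝ) / 2) * S ^ ((n + 1) / 2)) * (y ^ 2 + r ^ 2) ^ (-((n + 1) / 2)) := by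
  have hα : 0 ≤ (n + 1) / 2 := by linarith
  set s := y ^ 2 + r ^ 2
  set α := (n + 1) / 2
  have hS : 1 ≤ S ^ α * s ^ (-α) := by
    rw [rpow_neg hs.le, ← div_eq_mul_inv, one_le_div (by positivity)]
    exact rpow_le_rpow hs.le hsS hα
  calc ∫ t in Ioi 0, subordinationIntegrand k y t
      ≤ c₃ * (min 4⁻¹ c₄⁻¹ * s) ^ (-α) * Gamma α + 2 * M * T ^ (-(1 : ℝ) / 2) * 1 := by
        simpa only [mul_one] using
          integral_subordinationIntegrand_le hkm hT hn hc₃ hc₄ hs hk hgauss hbdd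
    _ ≤ c₃ * (min 4⁻¹ c₄⁻¹ * s) ^ (-α) * Gamma α +
          2 * M * T ^ (-(1 : ℝ) / 2) * (S ^ α * s ^ (-α)) := by gcongr
    _ = _ := by rw [mul_rpow (by positivity) hs.le]; ring

lemma le_subordinationIntegrand (hn : 0 ≤ n) (hc₁ : 0 ≤ c₁) (hc₂ : 0 < c₂) (hε : 0 < ε)
    (hs : 0 < y ^ 2 + r ^ 2) (hεT : 2 * ε * (y ^ 2 + r ^ 2) < T)
    (hgauss : ∀ t, 0 < t → t < T → c₁ * t ^ (-n / 2) * exp (-(r ^ 2 / (c₂ * t))) ≤ k t)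
    (ht : t ∈ Ioc (ε * (y ^ 2 + r ^ 2)) (2 * ε * (y ^ 2 + r ^ 2))) :
    c₁ * exp (-(1 / (4 * ε))) * exp (-(1 / (c₂ * ε))) *
        (2 * ε * (y ^ 2 + r ^ 2)) ^ (-((n + 1) / 2) - 1) ≤
      subordinationIntegrand k y t := by
  obtain ⟨hlo, hhi⟩ := ht
  have ht0 : 0 < t := (by positivity : 0 < ε * (y ^ 2 + r ^ 2)).trans hlo
  calc c₁ * exp (-(1 / (4 * ε))) * exp (-(1 / (c₂ * ε))) *
        (2 * ε * (y ^ 2 + r ^ 2)) ^ (-((n + 1) / 2) - 1)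
      = exp (-(1 / (4 * ε))) *
          (c₁ * (2 * ε * (y ^ 2 + r ^ 2)) ^ (-n / 2) * exp (-(1 / (c₂ * ε)))) *
          (2 * ε * (y ^ 2 + r ^ 2)) ^ (-(3 : ℝ) / 2) := by
        rw [show -((n + 1) / 2) - 1 = -n / 2 + -(3 : ℝ) / 2 by ring, rpow_add (by positivity)]
        ring
    _ ≤ exp (-(y ^ 2 / (4 * t))) * (c₁ * t ^ (-n / 2) * exp (-(r ^ 2 / (c₂ * t)))) *
          t ^ (-(3 : ℝ) / 2) := by
        gcongr ?_ * (c₁ * ?_ * ?_) * ?_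
        · exact exp_neg_inv_le_exp_neg_div (by norm_num) hε hs (by nlinarith) hlo.le
        · exact rpow_le_rpow_of_nonpos ht0 hhi (by linarith)
        · exact exp_neg_inv_le_exp_neg_div hc₂ hε hs (by nlinarith) hlo.le
        · exact rpow_le_rpow_of_nonpos ht0 hhi (by norm_num)
    _ ≤ subordinationIntegrand k y t := by
        unfold subordinationIntegrand
        gcongr
        exact hgauss t ht0 (hhi.trans_lt hεT)

lemma le_integral_subordinationIntegrand (hf : IntegrableOn (subordinationIntegrand k y) (Ioi 0))
    (hk : ∀ t, 0 < t → 0 ≤ k t) (hn : 0 ≤ n) (hc₁ : 0 ≤ c₁) (hc₂ : 0 < c₂) (hε : 0 < ε)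
    (hs : 0 < y ^ 2 + r ^ 2) (hεT : 2 * ε * (y ^ 2 + r ^ 2) < T)
    (hgauss : ∀ t, 0 < t → t < T → c₁ * t ^ (-n / 2) * exp (-(r ^ 2 / (c₂ * t))) ≤ k t) :
    c₁ * exp (-(1 / (4 * ε))) * exp (-(1 / (c₂ * ε))) * (2 * ε) ^ (-((n + 1) / 2) - 1) * ε *
        (y ^ 2 + r ^ 2) ^ (-((n + 1) / 2)) ≤ ∫ t in Ioi 0, subordinationIntegrand k y t := by
  set s := y ^ 2 + r ^ 2
  have hsub : Ioc (ε * s) (2 * ε * s) ⊆ Ioi 0 := fun t ht => (by positivity : 0 < ε * s).trans ht.1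
  calc _ = c₁ * exp (-(1 / (4 * ε))) * exp (-(1 / (c₂ * ε))) *
        (2 * ε * s) ^ (-((n + 1) / 2) - 1) * volume.real (Ioc (ε * s) (2 * ε * s)) := by
        rw [volume_real_Ioc_of_le (by nlinarith), mul_rpow (by positivity) hs.le,
          rpow_sub_one hs.ne']
        field_simp
        ring
    _ ≤ ∫ t in Ioc (ε * s) (2 * ε * s), subordinationIntegrand k y t :=
        setIntegral_ge_of_const_le_real measurableSet_Ioc measure_Ioc_lt_top.ne
          (fun t ht => le_subordinationIntegrand hn hc₁ hc₂ hε hs hεT hgauss ht) (hf.mono_set hsub)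
    _ ≤ ∫ t in Ioi 0, subordinationIntegrand k y t := by
        refine setIntegral_mono_set hf ?_ hsub.eventuallyLE
        filter_upwards [ae_restrict_mem measurableSet_Ioi] with t (ht : 0 < t)
        exact subordinationIntegrand_nonneg ht (hk t ht)

end Subordination

theorem subordinated_kernel_comparable_general (n : ℕ)
    (T D M c₁ c₂ c₃ c₄ : ℝ)
    (hT : 0 < T)
    (hc₁ : 0 < c₁) (hc₂ : 0 < c₂) (hc₃ : 0 < c₃) (hc₄ : 0 < c₄) :
    ∃ c C : ℝ, 0 < c ∧ c ≤ C ∧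
      ∀ K : ℝ → ℝ → ℝ,
        Measurable (Function.uncurry K) →
        (∀ t r, 0 < t → t < T → 0 < r → r ≤ D →
          c₁ * t ^ (-(n : ℝ) / 2) * Real.exp (-(r ^ 2 / (c₂ * t))) ≤ K t r) →
        (∀ t r, 0 < t → t < T → 0 < r → r ≤ D →
          K t r ≤ c₃ * t ^ (-(n : ℝ) / 2) * Real.exp (-(r ^ 2 / (c₄ * t)))) →
        (∀ t r, T ≤ t → 0 < r → r ≤ D → 0 ≤ K t r ∧ K t r ≤ M) →
        ∀ y r : ℝ, 0 < y → y < 1 → 0 < r → r ≤ D →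
          c * y / (y ^ 2 + r ^ 2) ^ (((n : ℝ) + 1) / 2) ≤
            (y / (2 * Real.sqrt Real.pi)) *
              ∫ t in Set.Ioi (0 : ℝ),
                Real.exp (-(y ^ 2 / (4 * t))) * K t r * t ^ (-(3 : ℝ) / 2) ∧
          (y / (2 * Real.sqrt Real.pi)) *
              ∫ t in Set.Ioi (0 : ℝ),
                Real.exp (-(y ^ 2 / (4 * t))) * K t r * t ^ (-(3 : ℝ) / 2) ≤
            C * y / (y ^ 2 + r ^ 2) ^ (((n : ℝ) + 1) / 2) := by
  have hn : (0 : ℝ) ≤ n := n.cast_nonneg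
  set ε := T / (4 * (1 + D ^ 2))
  have hε : 0 < ε := by positivity
  set c₀ := c₁ * exp (-(1 / (4 * ε))) * exp (-(1 / (c₂ * ε))) *
    (2 * ε) ^ (-(((n : ℝ) + 1) / 2) - 1) * ε
  set C₀ := c₃ * (min 4⁻¹ c₄⁻¹) ^ (-(((n : ℝ) + 1) / 2)) * Gamma (((n : ℝ) + 1) / 2) +
    2 * M * T ^ (-(1 : ℝ) / 2) * (1 + D ^ 2) ^ (((n : ℝ) + 1) / 2)
  refine ⟨c₀ / (2 * √π), max c₀ C₀ / (2 * √π), by positivity, by gcongr; exact le_max_left _ _, ?_⟩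
  intro K hK hlow hupp hbig y r hy hy1 hr hrD
  have hKm : Measurable (K · r) := hK.comp (measurable_id.prodMk measurable_const)
  have hlow' t (ht : 0 < t) (htT : t < T) := hlow t r ht htT hr hrD
  have hupp' t (ht : 0 < t) (htT : t < T) := hupp t r ht htT hr hrD
  have hbdd t (htT : T ≤ t) := (hbig t r htT hr hrD).2
  have hk t (ht : 0 < t) : 0 ≤ K t r := (lt_or_ge t T).elim
    (fun htT => le_trans (by positivity) (hlow' t ht htT)) fun htT => (hbig t r htT hr hrD).1
  have hs : 0 < y ^ 2 + r ^ 2 := by positivity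
  have hsS : y ^ 2 + r ^ 2 ≤ 1 + D ^ 2 := by nlinarith
  have hεT : 2 * ε * (y ^ 2 + r ^ 2) < T := by
    have : 2 * ε * (1 + D ^ 2) = T / 2 := by simp only [ε]; field_simp; ring
    nlinarith
  have hupper := integral_subordinationIntegrand_le_mul_rpow hKm hT (by linarith)
    ((hk T hT).trans (hbdd T le_rfl)) hc₃.le hc₄ hs hsS hk hupp' hbdd
  have hlower := le_integral_subordinationIntegrand
    (integrableOn_subordinationIntegrand hKm hT (by linarith) hc₃.le hc₄ hs hk hupp' hbdd)
    hk hn hc₁.le hc₂ hε hs hεT hlow'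
  have hscale (a : ℝ) : a / (2 * √π) * y / (y ^ 2 + r ^ 2) ^ (((n : ℝ) + 1) / 2) =
      y / (2 * √π) * (a * (y ^ 2 + r ^ 2) ^ (-(((n : ℝ) + 1) / 2))) := by
    rw [rpow_neg hs.le]; ring
  rw [hscale, hscale]
  exact ⟨by gcongr; exact hlower, by gcongr; exact hupper.trans (by gcongr; exact le_max_right _ _)⟩

/-- Two-sided comparability for the subordinated (Poisson-type) kernel built from a kernel `K`
satisfying two-sided Gaussian bounds for small times and a uniform bound for large times:
`P(y,r) = (y/(2√π)) ∫₀^∞ e^{-y²/(4t)} K(t,r) t^{-3/2} dt` is comparable to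
`y/(y²+r²)^{(n+1)/2}` for `0 < y < 1` and `0 < r ≤ D`, with constants depending only on
`n, T, D, M, c₁, c₂, c₃, c₄`. -/
theorem subordinated_kernel_comparable (n : ℕ) (hn : 1 ≤ n)
    (T D M c₁ c₂ c₃ c₄ : ℝ)
    (hT : 0 < T) (hD : 0 < D) (hM : 0 < M)
    (hc₁ : 0 < c₁) (hc₂ : 0 < c₂) (hc₃ : 0 < c₃) (hc₄ : 0 < c₄) :
    ∃ c C : ℝ, 0 < c ∧ c ≤ C ∧
      ∀ K : ℝ → ℝ → ℝ,
        Measurable (Function.uncurry K) →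
        (∀ t r, 0 < t → t < T → 0 < r → r ≤ D →
          c₁ * t ^ (-(n : ℝ) / 2) * Real.exp (-(r ^ 2 / (c₂ * t))) ≤ K t r) →
        (∀ t r, 0 < t → t < T → 0 < r → r ≤ D →
          K t r ≤ c₃ * t ^ (-(n : ℝ) / 2) * Real.exp (-(r ^ 2 / (c₄ * t)))) →
        (∀ t r, T ≤ t → 0 < r → r ≤ D → 0 ≤ K t r ∧ K t r ≤ M) →
        ∀ y r : ℝ, 0 < y → y < 1 → 0 < r → r ≤ D →
          c * y / (y ^ 2 + r ^ 2) ^ (((n : ℝ) + 1) / 2) ≤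
            (y / (2 * Real.sqrt Real.pi)) *
              ∫ t in Set.Ioi (0 : ℝ),
                Real.exp (-(y ^ 2 / (4 * t))) * K t r * t ^ (-(3 : ℝ) / 2) ∧
          (y / (2 * Real.sqrt Real.pi)) *
              ∫ t in Set.Ioi (0 : ℝ),
                Real.exp (-(y ^ 2 / (4 * t))) * K t r * t ^ (-(3 : ℝ) / 2) ≤
            C * y / (y ^ 2 + r ^ 2) ^ (((n : ℝ) + 1) / 2) :=
  subordinated_kernel_comparable_general n T D M c₁ c₂ c₃ c₄ hT hc₁ hc₂ hc₃ hc₄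
end

section
/- Let p > 0, θ > 1, K > 0, and let (α_j)_{j≥1} be a sequence of positive real numbers satisfying α_{j+1} ≤ (K r_j)^θ · α_j^θ for all j ≥ 1, where r_j = p θ^{j−1}. Then limsup_{j→∞} (log α_j)/r_j ≤ (1/p) [ log α₁ + (θ/(θ−1)) log(Kp) + (θ/(θ−1)²) log θ ]. -/
open Real Filter

/-! Writing `b_j = log α_j / r_j`, the recursion gives `b_{j+1} ≤ b_j + log (K r_j) / r_j`, and
`log (K r_j) / r_j = (log (K p) + (j - 1) log θ) / (p θ^{j-1})` is summable, being an
arithmetico-geometric series of ratio `θ⁻¹`. Hence `b_j` is bounded by the partial sums of a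
convergent series started at `b_1`, and its limsup by the full sum, which is the stated constant. -/

lemma le_add_sum_range_of_le_add {b t : ℕ → ℝ} (hb : ∀ n, b (n + 1) ≤ b n + t n) (n : ℕ) :
    b n ≤ b 0 + ∑ i ∈ Finset.range n, t i := by
  induction n with
  | zero => simp
  | succ n ih =>
    rw [Finset.sum_range_succ]
    linarith [hb n]

lemma limsup_le_add_of_le_add_of_hasSum {b t : ℕ → ℝ} {s : ℝ}
    (hb : ∀ n, b (n + 1) ≤ b n + t n) (ht : HasSum t s) :
    limsup (fun n => (b n : EReal)) atTop ≤ ((b 0 + s : ℝ) : EReal) := by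
  have hpartial : Tendsto (fun n => ((b 0 + ∑ i ∈ Finset.range n, t i : ℝ) : EReal)) atTop
      (nhds ((b 0 + s : ℝ) : EReal)) :=
    EReal.tendsto_coe.2 (tendsto_const_nhds.add ht.tendsto_sum_nat)
  calc limsup (fun n => (b n : EReal)) atTop
      ≤ limsup (fun n => ((b 0 + ∑ i ∈ Finset.range n, t i : ℝ) : EReal)) atTop :=
        limsup_le_limsup (Eventually.of_forall fun n =>
          EReal.coe_le_coe_iff.2 (le_add_sum_range_of_le_add hb n))
    _ = ((b 0 + s : ℝ) : EReal) := hpartial.limsup_eq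

lemma hasSum_add_mul_div_pow {θ : ℝ} (hθ : 1 < θ) (c d : ℝ) :
    HasSum (fun n : ℕ => (c + n * d) / θ ^ n)
      (θ / (θ - 1) * c + θ / (θ - 1) ^ 2 * d) := by
  have hθ0 : 0 < θ := one_pos.trans hθ
  have hx : ‖θ⁻¹‖ < 1 := by
    rw [norm_inv, Real.norm_of_nonneg hθ0.le]
    exact inv_lt_one_of_one_lt₀ hθ
  have hgeom := (hasSum_geometric_of_norm_lt_one hx).mul_left c
  have harith := (hasSum_coe_mul_geometric_of_norm_lt_one hx).mul_left d
  have hterm : (fun n : ℕ => (c + n * d) / θ ^ n)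
      = fun n : ℕ => c * θ⁻¹ ^ n + d * (n * θ⁻¹ ^ n) := by
    ext n
    rw [inv_pow]
    field_simp
  have hvalue : θ / (θ - 1) * c + θ / (θ - 1) ^ 2 * d
      = c * (1 - θ⁻¹)⁻¹ + d * (θ⁻¹ / (1 - θ⁻¹) ^ 2) := by
    field_simp
  rw [hterm, hvalue]
  exact hgeom.add harith

lemma log_div_mul_le_of_le_rpow_mul_rpow {a a' c r θ : ℝ} (ha : 0 < a) (ha' : 0 < a')
    (hc : 0 < c) (hr : 0 < r) (hθ : 0 < θ) (h : a' ≤ c ^ θ * a ^ θ) :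
    log a' / (θ * r) ≤ log a / r + log c / r := by
  rw [div_le_iff₀ (by positivity)]
  calc log a' ≤ log (c ^ θ * a ^ θ) := log_le_log ha' h
    _ = θ * (log c + log a) := by
      rw [log_mul (by positivity) (by positivity), log_rpow hc, log_rpow ha]
      ring
    _ = (log a / r + log c / r) * (θ * r) := by
      field_simp
      ring

/-- Abstract iteration lemma: if `α_{j+1} ≤ (K r_j)^θ α_j^θ` with `r_j = p θ^{j−1}`, then
`limsup_j (log α_j)/r_j ≤ (1/p)[log α₁ + (θ/(θ−1)) log(Kp) + (θ/(θ−1)²) log θ]`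
(the limsup being taken in the extended reals). -/
theorem iteration_limsup_bound (p θ K : ℝ) (hp : 0 < p) (hθ : 1 < θ) (hK : 0 < K)
    (α : ℕ → ℝ) (hα : ∀ j : ℕ, 1 ≤ j → 0 < α j)
    (hrec : ∀ j : ℕ, 1 ≤ j → α (j + 1) ≤ (K * (p * θ ^ (j - 1))) ^ θ * (α j) ^ θ) :
    Filter.limsup (fun j : ℕ => ((Real.log (α j) / (p * θ ^ (j - 1)) : ℝ) : EReal)) atTop ≤
      (((1 / p) * (Real.log (α 1) + (θ / (θ - 1)) * Real.log (K * p)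
        + (θ / (θ - 1) ^ 2) * Real.log θ) : ℝ) : EReal) := by
  have hθ0 : 0 < θ := one_pos.trans hθ
  set b : ℕ → ℝ := fun n => log (α (n + 1)) / (p * θ ^ n)
  set t : ℕ → ℝ := fun n => (log (K * p) + n * log θ) / θ ^ n / p
  have hstep (n : ℕ) : b (n + 1) ≤ b n + t n := by
    have h := hrec (n + 1) (by omega)
    rw [Nat.add_sub_cancel] at h
    have hlogKr : log (K * (p * θ ^ n)) = log (K * p) + n * log θ := by
      rw [← mul_assoc, log_mul (by positivity) (by positivity), log_pow]
    have hlog := log_div_mul_le_of_le_rpow_mul_rpow (r := p * θ ^ n) (hα (n + 1) (by omega))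
      (hα (n + 2) (by omega)) (by positivity) (by positivity) hθ0 h
    rw [hlogKr] at hlog
    simp only [b, t, pow_succ]
    convert hlog using 2 <;> ring
  have hsum := (hasSum_add_mul_div_pow hθ (log (K * p)) (log θ)).div_const p
  rw [← limsup_nat_add _ 1]
  convert limsup_le_add_of_le_add_of_hasSum hstep hsum using 3
  simp only [b, Nat.add_sub_cancel]
  ring
end

section
/- Let (Ω, μ) be a measure space with μ(Ω) < ∞, let u : Ω → [0,∞) be measurable, and let ν > 2, p > 1, C > 0. Suppose that for every real s ≥ p/2 one has (∫_Ω u^{sν} dμ)^{2/ν} ≤ C s ∫_Ω u^{2s} dμ, where the inequality is understood in [0,∞]. Then, provided ∫_Ω u^p dμ < ∞, u is essentially bounded and ess sup u ≤ K (∫_Ω u^p dμ)^{1/p}, where K is a constant depending only on C, p and ν. -/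
/-!
Put `χ = ν / 2` and `q_k = p χ^k`. The hypothesis at `s = q_k / 2` reads
`‖u‖_{q_{k+1}} ≤ (C q_k / 2)^{1/q_k} ‖u‖_{q_k}`, hence
`‖u‖_{q_k} ≤ (∏_{j<k} (C q_j / 2)^{1/q_j}) ‖u‖_p`. The logarithm of this product is
`∑_{j<k} (log (C p / 2) + j log χ) / (p χ^j)`, a partial sum of a convergent series, so
the `L^{q_k}` norms stay below `K ‖u‖_p`. Since `q_k → ∞`, Chebyshev's inequality carries
the bound over to the essential supremum.
-/

open MeasureTheory Real Set ENNReal Filter Finset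

theorem ENNReal.le_rpow_inv_mul_of_rpow_le_mul_rpow {a b c : ℝ≥0∞} {q : ℝ} (hq : 0 < q)
    (h : a ^ q ≤ c * b ^ q) : a ≤ c ^ q⁻¹ * b := by
  rwa [← ENNReal.rpow_le_rpow_iff hq, ENNReal.mul_rpow_of_nonneg _ _ hq.le, ← ENNReal.rpow_mul,
    inv_mul_cancel₀ hq.ne', ENNReal.rpow_one]

theorem le_prod_range_mul_of_le_mul {M : Type*} [CommMonoid M] [Preorder M] [MulLeftMono M]
    {B c : ℕ → M} (h : ∀ k, B (k + 1) ≤ c k * B k) (k : ℕ) :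
    B k ≤ (∏ j ∈ range k, c j) * B 0 := by
  induction k with
  | zero => simp
  | succ k ih =>
    calc B (k + 1) ≤ c k * B k := h k
      _ ≤ c k * ((∏ j ∈ range k, c j) * B 0) := mul_le_mul_right ih _
      _ = (∏ j ∈ range (k + 1), c j) * B 0 := by
        rw [prod_range_succ, mul_comm _ (c k), mul_assoc]

theorem summable_log_mul_pow_div_mul_pow {a χ : ℝ} (ha : 0 < a) (hχ : 1 < χ) (b : ℝ) :
    Summable fun j : ℕ => Real.log (a * χ ^ j) / (b * χ ^ j) := by
  have hr : ‖χ⁻¹‖ < 1 := by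
    rw [norm_inv, Real.norm_of_nonneg (by linarith)]; exact inv_lt_one_of_one_lt₀ hχ
  have hgeom := (summable_geometric_of_norm_lt_one hr).mul_left (log a / b)
  have harith := (summable_pow_mul_geometric_of_norm_lt_one 1 hr).mul_left (log χ / b)
  refine (hgeom.add harith).congr fun j => ?_
  rw [Real.log_mul ha.ne' (by positivity), Real.log_pow]
  simp only [pow_one, inv_pow]
  field_simp

theorem prod_mul_pow_rpow_le_exp_tsum {a χ : ℝ} (ha : 0 < a) (hχ : 1 < χ) (b : ℝ) (k : ℕ) :
    ∏ j ∈ range k, (a * χ ^ j) ^ (b * χ ^ j)⁻¹ ≤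
      exp (∑' j, |Real.log (a * χ ^ j) / (b * χ ^ j)|) := by
  have hpos : ∀ j : ℕ, 0 < a * χ ^ j := fun j => by positivity
  simp_rw [rpow_def_of_pos (hpos _), ← exp_sum]
  refine exp_le_exp.2 ((sum_le_sum fun j _ => le_abs_self _).trans ?_)
  simp_rw [← div_eq_mul_inv]
  exact (summable_log_mul_pow_div_mul_pow ha hχ b).abs.sum_le_tsum _ fun j _ => abs_nonneg _

section

variable {α : Type*} {m : MeasurableSpace α} {μ : Measure α}

theorem eLpNormEssSup_le_of_eLpNorm'_le {ι ε : Type*} [TopologicalSpace ε] [ContinuousENorm ε]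
    {f : α → ε} (hf : AEStronglyMeasurable f μ)
    {l : Filter ι} [l.NeBot] {q : ι → ℝ} (hq : Tendsto q l atTop) {L : ℝ≥0∞}
    (hL : ∀ i, eLpNorm' f (q i) μ ≤ L) : eLpNormEssSup f μ ≤ L := by
  refine le_of_forall_gt_imp_ge_of_dense fun t hLt => ?_
  rcases eq_or_ne t ∞ with rfl | ht
  · exact le_top
  have hnull : μ {x | t ≤ ‖f x‖ₑ} = 0 := by
    refine le_antisymm (ge_of_tendsto ((ENNReal.tendsto_rpow_atTop_of_base_lt_one
      (b := L / t) (div_lt_of_lt_mul' (by rwa [mul_one]))).comp hq) ?_) bot_le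
    filter_upwards [hq.eventually_gt_atTop 0] with i hi
    calc μ {x | t ≤ ‖f x‖ₑ}
        ≤ t⁻¹ ^ (ENNReal.ofReal (q i)).toReal *
            eLpNorm f (.ofReal (q i)) μ ^ (ENNReal.ofReal (q i)).toReal :=
          meas_ge_le_mul_pow_eLpNorm_enorm μ (by simpa using hi) ofReal_ne_top hf hLt.ne_bot
            (absurd · ht)
      _ = t⁻¹ ^ q i * eLpNorm' f (q i) μ ^ q i := by
          rw [eLpNorm_eq_eLpNorm' (by simpa using hi) ofReal_ne_top, toReal_ofReal hi.le]
      _ ≤ t⁻¹ ^ q i * L ^ q i := by gcongr; exact hL i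
      _ = (L / t) ^ q i := by rw [ENNReal.div_eq_inv_mul, ENNReal.mul_rpow_of_nonneg _ _ hi.le]
  refine essSup_le_of_ae_le t (measure_mono_null (fun x hx => ?_) hnull)
  exact le_of_not_ge (show ¬‖f x‖ₑ ≤ t from hx)

theorem lintegral_ofReal_rpow_eq_eLpNorm'_rpow {u : α → ℝ} (hu : ∀ x, 0 ≤ u x) {r : ℝ}
    (hr : 0 < r) :
    ∫⁻ x, ENNReal.ofReal (u x ^ r) ∂μ = eLpNorm' u r μ ^ r := by
  rw [← lintegral_rpow_enorm_eq_rpow_eLpNorm' hr]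
  congr with x
  rw [Real.enorm_of_nonneg (hu x), ofReal_rpow_of_nonneg (hu x) hr.le]

theorem eLpNorm'_le_of_lintegral_rpow_le {u : α → ℝ} (hu : ∀ x, 0 ≤ u x) {ν s : ℝ} (hν : 0 < ν)
    (hs : 0 < s) {c : ℝ≥0∞}
    (h : (∫⁻ x, ENNReal.ofReal (u x ^ (s * ν)) ∂μ) ^ (2 / ν) ≤
      c * ∫⁻ x, ENNReal.ofReal (u x ^ (2 * s)) ∂μ) :
    eLpNorm' u (s * ν) μ ≤ c ^ (2 * s)⁻¹ * eLpNorm' u (2 * s) μ := by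
  refine ENNReal.le_rpow_inv_mul_of_rpow_le_mul_rpow (by positivity) ?_
  rwa [lintegral_ofReal_rpow_eq_eLpNorm'_rpow hu (by positivity),
    lintegral_ofReal_rpow_eq_eLpNorm'_rpow hu (by positivity), ← ENNReal.rpow_mul,
    show s * ν * (2 / ν) = 2 * s by field_simp] at h

end

/-- Abstract Moser-iteration lemma: on a finite measure space, if a nonnegative measurable `u`
satisfies `(∫ u^{sν})^{2/ν} ≤ C s ∫ u^{2s}` (in `[0,∞]`) for every `s ≥ p/2`, and
`∫ u^p < ∞`, then `u` is essentially bounded with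
`ess sup u ≤ K (∫ u^p)^{1/p}`, where `K` depends only on `C`, `p` and `ν`. -/
theorem abstract_moser_iteration (ν p C : ℝ) (hν : 2 < ν) (hp : 1 < p) (hC : 0 < C) :
    ∃ K : ℝ, 0 < K ∧
      ∀ (X : Type) (_ : MeasurableSpace X) (μ : Measure X), IsFiniteMeasure μ →
        ∀ u : X → ℝ, Measurable u → (∀ x, 0 ≤ u x) →
        (∀ s : ℝ, p / 2 ≤ s →
          (∫⁻ x, ENNReal.ofReal (u x ^ (s * ν)) ∂μ) ^ (2 / ν) ≤
            ENNReal.ofReal (C * s) * ∫⁻ x, ENNReal.ofReal (u x ^ (2 * s)) ∂μ) →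
        (∫⁻ x, ENNReal.ofReal (u x ^ p) ∂μ) ≠ ⊤ →
        essSup (fun x => ENNReal.ofReal (u x)) μ ≤
          ENNReal.ofReal K * (∫⁻ x, ENNReal.ofReal (u x ^ p) ∂μ) ^ (1 / p) := by
  obtain ⟨χ, rfl⟩ : ∃ χ, ν = 2 * χ := ⟨ν / 2, by ring⟩
  have hχ : 1 < χ := by linarith
  have hp0 : 0 < p := by linarith
  have hCp : 0 < C * p / 2 := by positivity
  set K := exp (∑' j, |Real.log (C * p / 2 * χ ^ j) / (p * χ ^ j)|)
  refine ⟨K, exp_pos _, ?_⟩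
  intro X _ μ _ u hu hu0 hyp _
  set N : ℕ → ℝ≥0∞ := fun k => eLpNorm' u (p * χ ^ k) μ
  have step (k : ℕ) :
      N (k + 1) ≤ ENNReal.ofReal ((C * p / 2 * χ ^ k) ^ (p * χ ^ k)⁻¹) * N k := by
    have hs : p / 2 ≤ p * χ ^ k / 2 := by
      gcongr; exact le_mul_of_one_le_right hp0.le (one_le_pow₀ hχ.le)
    rw [← ENNReal.ofReal_rpow_of_nonneg (by positivity) (by positivity)]
    simpa only [show p * χ ^ k / 2 * (2 * χ) = p * χ ^ (k + 1) by ring,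
      show 2 * (p * χ ^ k / 2) = p * χ ^ k by ring,
      show C * (p * χ ^ k / 2) = C * p / 2 * χ ^ k by ring]
      using eLpNorm'_le_of_lintegral_rpow_le hu0 (by linarith) (by positivity) (hyp _ hs)
  have bound (k : ℕ) : N k ≤ ENNReal.ofReal K * N 0 := by
    refine (le_prod_range_mul_of_le_mul step k).trans (mul_le_mul_left ?_ _)
    rw [← ENNReal.ofReal_prod_of_nonneg fun j _ => by positivity]
    exact ENNReal.ofReal_le_ofReal (prod_mul_pow_rpow_le_exp_tsum hCp hχ p k)
  have hN0 : N 0 = (∫⁻ x, ENNReal.ofReal (u x ^ p) ∂μ) ^ (1 / p) := by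
    rw [lintegral_ofReal_rpow_eq_eLpNorm'_rpow hu0 hp0, ← ENNReal.rpow_mul,
      mul_one_div_cancel hp0.ne', ENNReal.rpow_one]
    simp [N]
  have hsup : essSup (fun x => ENNReal.ofReal (u x)) μ = eLpNormEssSup u μ := by
    simp only [eLpNormEssSup, Real.enorm_of_nonneg (hu0 _)]
  rw [hsup, ← hN0]
  exact eLpNormEssSup_le_of_eLpNorm'_le hu.aestronglyMeasurable
    ((tendsto_pow_atTop_atTop_of_one_lt hχ).const_mul_atTop hp0) bound
end
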